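/- The space of derivations of the algebra 𝔠₈₁ on ℂ⁵ with nonzero basis products e₁e₁ = e₂, e₁e₂ = e₃, e₁e₃ = e₄, e₂e₂ = 2e₄, e₂e₄ = e₅ is 3-dimensional over ℂ. -/

import Mathlib

/-!
A derivation `D` of `𝔠₈₁` is determined by `a = D e₁`, because `e₁` generates the algebra:
`e₂ = e₁e₁`, `e₃ = e₁e₂`, `e₄ = e₁e₃`, `e₅ = e₂e₄`. The relations `e₁e₄ = 0` and `e₂e₂ = 2e₄`
force `a₂ = a₃ = 0`, while `a₁, a₄, a₅` are free: they are realised by the grading derivation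
(`eᵢ` of degree `1, 2, 3, 4, 6`), by `e₁ ↦ e₄, e₃ ↦ e₅`, and by `e₁ ↦ e₅`.
-/

/-- Structure constants of 𝔠₈₁: e₁e₁ = e₂, e₁e₂ = e₃, e₁e₃ = e₄, e₂e₂ = 2e₄,
e₂e₄ = e₅ (extended symmetrically; unlisted products are zero). -/
noncomputable def tbl81 : Fin 5 → Fin 5 → Fin 5 → ℂ :=
  ![![![0,1,0,0,0], ![0,0,1,0,0], ![0,0,0,1,0], 0, 0],
    ![![0,0,1,0,0], ![0,0,0,2,0], 0, ![0,0,0,0,1], 0],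
    ![![0,0,0,1,0], 0, 0, 0, 0],
    ![0, ![0,0,0,0,1], 0, 0, 0],
    0]

/-- The bilinear multiplication of 𝔠₈₁ on ℂ⁵. -/
noncomputable def mul81 (x y : Fin 5 → ℂ) : Fin 5 → ℂ :=
  fun k => ∑ i, ∑ j, x i * y j * tbl81 i j k

lemma mul81_add_left (x x' y : Fin 5 → ℂ) :
    mul81 (x + x') y = mul81 x y + mul81 x' y := by
  funext k
  simp [mul81, add_mul, Finset.sum_add_distrib]

lemma mul81_add_right (x y y' : Fin 5 → ℂ) :
    mul81 x (y + y') = mul81 x y + mul81 x y' := by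
  funext k
  simp [mul81, mul_add, add_mul, Finset.sum_add_distrib]

lemma mul81_smul_left (c : ℂ) (x y : Fin 5 → ℂ) :
    mul81 (c • x) y = c • mul81 x y := by
  funext k
  simp only [mul81, Pi.smul_apply, smul_eq_mul, Finset.mul_sum]
  exact Finset.sum_congr rfl fun i _ => Finset.sum_congr rfl fun j _ => by ring

lemma mul81_smul_right (c : ℂ) (x y : Fin 5 → ℂ) :
    mul81 x (c • y) = c • mul81 x y := by
  funext k
  simp only [mul81, Pi.smul_apply, smul_eq_mul, Finset.mul_sum]
  exact Finset.sum_congr rfl fun i _ => Finset.sum_congr rfl fun j _ => by ring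

lemma mul81_zero_left (y : Fin 5 → ℂ) : mul81 0 y = 0 := by
  funext k; simp [mul81]

lemma mul81_zero_right (x : Fin 5 → ℂ) : mul81 x 0 = 0 := by
  funext k; simp [mul81]

/-- The space of derivations of the algebra 𝔠₈₁, i.e. the ℂ-linear maps `D` with
`D(x·y) = D(x)·y + x·D(y)` for all `x, y`. -/
noncomputable def Der81 : Submodule ℂ ((Fin 5 → ℂ) →ₗ[ℂ] (Fin 5 → ℂ)) where
  carrier := {D | ∀ x y : Fin 5 → ℂ, D (mul81 x y) = mul81 (D x) y + mul81 x (D y)}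
  add_mem' := by
    intro D₁ D₂ h₁ h₂ x y
    simp only [LinearMap.add_apply, h₁ x y, h₂ x y, mul81_add_left, mul81_add_right]
    abel
  zero_mem' := by
    intro x y
    simp [mul81_zero_left, mul81_zero_right]
  smul_mem' := by
    intro c D hD x y
    simp only [LinearMap.smul_apply, hD x y, mul81_smul_left, mul81_smul_right,
      smul_add]

-- Indices are zero-based: `e i` is the basis vector written `eᵢ₊₁` above.
local notation "e" i:max => (Pi.single i (1 : ℂ) : Fin 5 → ℂ)

lemma mul81_eq (x y : Fin 5 → ℂ) :
    mul81 x y = ![0, x 0 * y 0, x 0 * y 1 + x 1 * y 0,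
      x 0 * y 2 + 2 * (x 1 * y 1) + x 2 * y 0, x 1 * y 3 + x 3 * y 1] := by
  funext k
  fin_cases k <;> simp [mul81, Fin.sum_univ_five, tbl81]; ring

lemma mul81_single :
    mul81 (e 0) (e 0) = e 1 ∧ mul81 (e 0) (e 1) = e 2 ∧ mul81 (e 0) (e 2) = e 3 ∧
      mul81 (e 0) (e 3) = 0 ∧ mul81 (e 1) (e 1) = (2 : ℂ) • e 3 ∧ mul81 (e 1) (e 3) = e 4 := by
  refine ⟨?_, ?_, ?_, ?_, ?_, ?_⟩ <;> funext k <;> fin_cases k <;> simp [mul81_eq]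

noncomputable def derBasis81 : Fin 3 → Module.End ℂ (Fin 5 → ℂ) :=
  ![Matrix.toLin' (Matrix.diagonal ![1, 2, 3, 4, 6]),
    Matrix.toLin' !![0, 0, 0, 0, 0; 0, 0, 0, 0, 0; 0, 0, 0, 0, 0; 1, 0, 0, 0, 0; 0, 0, 1, 0, 0],
    Matrix.toLin' (Matrix.single 4 0 1)]

lemma derBasis81_mem (i : Fin 3) : derBasis81 i ∈ Der81 := by
  intro x y
  funext k
  fin_cases i <;> fin_cases k <;>
    simp [derBasis81, mul81_eq, Matrix.mulVec, dotProduct, Fin.sum_univ_five, Matrix.single] <;> ring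

lemma derBasis81_apply_single_zero (i : Fin 3) :
    derBasis81 i (e 0) = ![![1, 0, 0, 0, 0], ![0, 0, 0, 1, 0], ![0, 0, 0, 0, 1]] i := by
  funext k
  fin_cases i <;> fin_cases k <;> simp [derBasis81, Matrix.single]

lemma apply_single_of_mem_Der81 {D : Module.End ℂ (Fin 5 → ℂ)} (hD : D ∈ Der81) :
    let a := D (e 0)
    a 1 = 0 ∧ a 2 = 0 ∧ D (e 1) = ![0, 2 * a 0, 0, 0, 0] ∧ D (e 2) = ![0, 0, 3 * a 0, 0, a 3] ∧
      D (e 3) = ![0, 0, 0, 4 * a 0, 0] ∧ D (e 4) = ![0, 0, 0, 0, 6 * a 0] := by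
  intro a
  obtain ⟨h00, h01, h02, h03, h11, h13⟩ := mul81_single
  have hD1 : D (e 1) = ![0, 2 * a 0, 2 * a 1, 2 * a 2, 0] := by
    rw [← h00, hD]; funext k; fin_cases k <;> simp [mul81_eq, a] <;> ring
  have hD2 : D (e 2) = ![0, 0, 3 * a 0, 4 * a 1, a 3] := by
    rw [← h01, hD, hD1]; funext k; fin_cases k <;> simp [mul81_eq, a] <;> ring
  have hD3 : D (e 3) = ![0, 0, 0, 4 * a 0, 0] := by
    rw [← h02, hD, hD2]; funext k; fin_cases k <;> simp [mul81_eq, a]; ring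
  have ha1 : a 1 = 0 := by
    have h := congrFun (hD (e 0) (e 3)) 4
    rw [h03, map_zero, hD3] at h
    simpa [mul81_eq, a, eq_comm] using h
  have ha2 : a 2 = 0 := by
    have h := congrFun (hD (e 1) (e 1)) 4
    rw [h11, map_smul, hD1, hD3] at h
    have h4 : 0 = 2 * a 2 + 2 * a 2 := by simpa [mul81_eq] using h
    linear_combination -h4 / 4
  refine ⟨ha1, ha2, by simp [hD1, ha1, ha2], by simp [hD2, ha1], hD3, ?_⟩
  rw [← h13, hD, hD1, hD3]; funext k; fin_cases k <;> simp [mul81_eq, a]; ring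

lemma eq_sum_derBasis81 {D : Module.End ℂ (Fin 5 → ℂ)} (hD : D ∈ Der81) :
    D = ∑ i, ![D (e 0) 0, D (e 0) 3, D (e 0) 4] i • derBasis81 i := by
  obtain ⟨ha1, ha2, hD1, hD2, hD3, hD4⟩ := apply_single_of_mem_Der81 hD
  refine (Pi.basisFun ℂ (Fin 5)).ext fun j => funext fun k => ?_
  fin_cases j <;> fin_cases k <;>
    simp [derBasis81, Fin.sum_univ_three, Matrix.single, ha1, ha2, hD1, hD2, hD3, hD4, mul_comm]

lemma linearIndependent_derBasis81 : LinearIndependent ℂ derBasis81 := by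
  refine Fintype.linearIndependent_iff.mpr fun g hg => ?_
  have h := congr(($hg) (e 0))
  simp only [LinearMap.sum_apply, LinearMap.smul_apply, derBasis81_apply_single_zero,
    LinearMap.zero_apply] at h
  intro i
  fin_cases i
  · simpa [Fin.sum_univ_three] using congrFun h 0
  · simpa [Fin.sum_univ_three] using congrFun h 3
  · simpa [Fin.sum_univ_three] using congrFun h 4

lemma Der81_eq_span : Der81 = Submodule.span ℂ (Set.range derBasis81) :=
  le_antisymm
    (fun _ hD => (Submodule.mem_span_range_iff_exists_fun ℂ).mpr ⟨_, (eq_sum_derBasis81 hD).symm⟩)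
    (Submodule.span_le.mpr (Set.range_subset_iff.mpr derBasis81_mem))

/-- The space of derivations of the algebra 𝔠₈₁ is 3-dimensional over ℂ. -/
theorem der_c81_dim_three : Module.finrank ℂ Der81 = 3 := by
  rw [Der81_eq_span, finrank_span_eq_card linearIndependent_derBasis81, Fintype.card_fin]
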